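/- arXiv:1212.2058 — 2 statements merged into one kernel-verified Lean document; each statement's English description precedes it below -/
import Mathlib

section
/- Let R = [a,b]×[c,d] be an axis-aligned rectangle, let c_V be a curve contained in R joining a point on the top edge {y=d} to a point on the bottom edge {y=c}, and let c_H be a curve contained in R joining a point on the left edge {x=a} to a point on the right edge {x=b}. Then c_V and c_H have a point in common. -/
/-!
Suppose the curves are disjoint. Extending them constantly beyond `[0,1]`, the difference
`Φ (s, t) = γV s - γH t`, read as a complex number, is a continuous nonvanishing map on the simply
connected plane, so it has a continuous logarithm. On each edge of the unit square `Φ` stays in a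
closed half-plane (fixed by the edge of the rectangle on which the corresponding endpoint lies),
and its corners lie in the four closed quadrants in turn; hence the imaginary part of the logarithm
is a branch of `arg` that cannot increase along any edge. The four increments around the square
sum to zero, so they all vanish, which forces `Φ (1, 0) = 0`.
-/

open Set Complex

section Lifting

variable {A : Type*} [TopologicalSpace A] [SimplyConnectedSpace A] [LocallyPathConnectedSpace A]

theorem exists_continuous_exp_eq (f : C(A, ℂ)) (hf : ∀ a, f a ≠ 0) :
    ∃ g : C(A, ℂ), ∀ a, exp (g a) = f a := by
  obtain ⟨a₀⟩ := (inferInstance : Nonempty A)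
  obtain ⟨g, ⟨-, hg⟩, -⟩ := isCoveringMapOn_exp.existsUnique_continuousMap_lifts f
    (a₀ := a₀) (exp_log (hf a₀)) hf
  exact ⟨g, congrFun hg⟩

theorem sub_eq_log_sub_log_of_exp_eq {f : A → ℂ} {g : C(A, ℂ)} (hexp : ∀ a, exp (g a) = f a)
    {u : ℂ} (hu : ∀ a, u * f a ∈ slitPlane) (a₀ a : A) :
    g a - g a₀ = log (u * f a) - log (u * f a₀) := by
  have hf : ∀ a, f a ≠ 0 := fun a => hexp a ▸ exp_ne_zero _
  have hu0 : u ≠ 0 := left_ne_zero_of_mul (slitPlane_ne_zero (hu a₀))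
  let F : C(A, ℂ) := ⟨f, funext hexp ▸ continuous_exp.comp g.continuous⟩
  let h : C(A, ℂ) := ⟨fun a => g a₀ + (log (u * f a) - log (u * f a₀)),
    continuous_const.add (((continuous_const.mul F.continuous).clog fun a => hu a).sub
      continuous_const)⟩
  have hh : ∀ a, exp (h a) = f a := by
    intro a
    simp only [h, ContinuousMap.coe_mk, exp_add, exp_sub, exp_log (slitPlane_ne_zero (hu _)),
      hexp]
    field_simp [hf a₀, hu0]
  have key := (isCoveringMapOn_exp.existsUnique_continuousMap_lifts F (a₀ := a₀)
    (hexp a₀) hf).unique ⟨rfl, funext hexp⟩ ⟨by simp [h], funext hh⟩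
  rw [key]
  simp [h]

theorem im_le_im_of_exp_eq_of_re_nonneg {f : A → ℂ} {g : C(A, ℂ)} (hexp : ∀ a, exp (g a) = f a)
    {u : ℂ} (hu : u ≠ 0) (hre : ∀ a, 0 ≤ (u * f a).re) {a₀ a₁ : A} (h₀ : 0 ≤ (u * f a₀).im)
    (h₁ : (u * f a₁).im ≤ 0) :
    (g a₁).im ≤ (g a₀).im ∧ ((g a₁).im = (g a₀).im → (u * f a₀).im = 0 ∧ (u * f a₁).im = 0) := by
  have hne : ∀ a, u * f a ≠ 0 := fun a => mul_ne_zero hu (hexp a ▸ exp_ne_zero _)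
  have hslit : ∀ a, u * f a ∈ slitPlane := fun a =>
    mem_slitPlane_iff.2 <| (hre a).lt_or_eq.imp id fun h h' => hne a (Complex.ext h.symm h')
  have harg := congrArg im (sub_eq_log_sub_log_of_exp_eq hexp hslit a₀ a₁)
  simp only [sub_im, log_im] at harg
  have harg₀ : 0 ≤ arg (u * f a₀) := arg_nonneg_iff.2 h₀
  have harg₁ : arg (u * f a₁) ≤ 0 := by
    rcases h₁.lt_or_eq with h | h
    · exact (arg_neg_iff.2 h).le
    · exact (arg_eq_zero_iff.2 ⟨hre a₁, h⟩).le
  refine ⟨by linarith, fun heq => ⟨?_, ?_⟩⟩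
  · exact (arg_eq_zero_iff.1 (by linarith)).2
  · exact (arg_eq_zero_iff.1 (by linarith)).2

end Lifting

theorem exists_eq_zero_of_re_im_signs {Φ : ℝ × ℝ → ℂ} (hΦ : Continuous Φ)
    (hre₀ : ∀ p : ℝ × ℝ, p.2 ≤ 0 → 0 ≤ (Φ p).re) (hre₁ : ∀ p : ℝ × ℝ, 1 ≤ p.2 → (Φ p).re ≤ 0)
    (him₀ : ∀ p : ℝ × ℝ, p.1 ≤ 0 → 0 ≤ (Φ p).im) (him₁ : ∀ p : ℝ × ℝ, 1 ≤ p.1 → (Φ p).im ≤ 0) :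
    ∃ p, Φ p = 0 := by
  by_contra! hne
  obtain ⟨g, hg⟩ := exists_continuous_exp_eq ⟨Φ, hΦ⟩ hne
  have edge (e : C(ℝ, ℝ × ℝ)) {u : ℂ} (hu : u ≠ 0) (hre : ∀ t, 0 ≤ (u * Φ (e t)).re)
      (h₀ : 0 ≤ (u * Φ (e 0)).im) (h₁ : (u * Φ (e 1)).im ≤ 0) :
      (g (e 1)).im ≤ (g (e 0)).im ∧
        ((g (e 1)).im = (g (e 0)).im → (u * Φ (e 0)).im = 0 ∧ (u * Φ (e 1)).im = 0) :=
    im_le_im_of_exp_eq_of_re_nonneg (g := g.comp e) (fun t => hg (e t)) hu hre h₀ h₁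
  obtain ⟨hbot, hbot_eq⟩ := edge ⟨fun t => (t, 0), by fun_prop⟩ one_ne_zero
    (by simpa using fun t => hre₀ (t, 0) le_rfl) (by simpa using him₀ (0, 0) le_rfl)
    (by simpa using him₁ (1, 0) le_rfl)
  obtain ⟨hright, hright_eq⟩ := edge ⟨fun t => (1, t), by fun_prop⟩ I_ne_zero
    (by simpa using fun t => him₁ (1, t) le_rfl) (by simpa using hre₀ (1, 0) le_rfl)
    (by simpa using hre₁ (1, 1) le_rfl)
  obtain ⟨htop, -⟩ := edge ⟨fun t => (1 - t, 1), by fun_prop⟩ (neg_ne_zero.2 one_ne_zero)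
    (by simpa using fun t => hre₁ (1 - t, 1) le_rfl) (by simpa using him₁ (1, 1) le_rfl)
    (by simpa using him₀ (0, 1) le_rfl)
  obtain ⟨hleft, -⟩ := edge ⟨fun t => (0, 1 - t), by fun_prop⟩ (neg_ne_zero.2 I_ne_zero)
    (by simpa using fun t => him₀ (0, 1 - t) le_rfl) (by simpa using hre₁ (0, 1) le_rfl)
    (by simpa using hre₀ (0, 0) le_rfl)
  simp only [ContinuousMap.coe_mk, sub_zero, sub_self] at hbot hright htop hleft hbot_eq hright_eq
  -- the four increments of `arg Φ` around the square are `≤ 0` and sum to `0`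
  have him := (hbot_eq (by linarith)).2
  have hre := (hright_eq (by linarith)).1
  simp only [one_mul, I_mul_im] at him hre
  exact hne (1, 0) (Complex.ext hre him)

theorem exists_eq_of_crossing {a b c d : ℝ} {V H : ℝ → ℝ × ℝ} (hV : Continuous V)
    (hH : Continuous H) (hVmem : ∀ s, V s ∈ Icc a b ×ˢ Icc c d)
    (hHmem : ∀ t, H t ∈ Icc a b ×ˢ Icc c d) (hVtop : ∀ s ≤ 0, (V s).2 = d)
    (hVbot : ∀ s, 1 ≤ s → (V s).2 = c) (hHleft : ∀ t ≤ 0, (H t).1 = a)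
    (hHright : ∀ t, 1 ≤ t → (H t).1 = b) :
    ∃ s t, V s = H t := by
  obtain ⟨p, hp⟩ := exists_eq_zero_of_re_im_signs
    (Φ := fun p => equivRealProdCLM.symm (V p.1 - H p.2)) (by fun_prop)
    (fun p hp => by simp [hHleft p.2 hp, (hVmem p.1).1.1])
    (fun p hp => by simp [hHright p.2 hp, (hVmem p.1).1.2])
    (fun p hp => by simp [hVtop p.1 hp, (hHmem p.2).2.2])
    (fun p hp => by simp [hVbot p.1 hp, (hHmem p.2).2.1])
  exact ⟨p.1, p.2, sub_eq_zero.1 (equivRealProdCLM.symm.injective (by simpa using hp))⟩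

theorem stmt1_general (a b c d : ℝ)
    (γV γH : ℝ → ℝ × ℝ)
    (hγV : ContinuousOn γV (Icc 0 1)) (hγH : ContinuousOn γH (Icc 0 1))
    (hVin : γV '' Icc 0 1 ⊆ Icc a b ×ˢ Icc c d)
    (hHin : γH '' Icc 0 1 ⊆ Icc a b ×ˢ Icc c d)
    (hVtop : (γV 0).2 = d) (hVbot : (γV 1).2 = c)
    (hHleft : (γH 0).1 = a) (hHright : (γH 1).1 = b) :
    ((γV '' Icc 0 1) ∩ (γH '' Icc 0 1)).Nonempty := by
  let proj : ℝ → Icc (0 : ℝ) 1 := projIcc 0 1 zero_le_one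
  have hproj : Continuous fun s => (proj s : ℝ) := continuous_subtype_val.comp continuous_projIcc
  obtain ⟨s, t, hst⟩ := exists_eq_of_crossing
    (V := fun s => γV (proj s)) (H := fun t => γH (proj t))
    (hγV.comp_continuous hproj fun s => (proj s).2) (hγH.comp_continuous hproj fun t => (proj t).2)
    (fun s => hVin (mem_image_of_mem _ (proj s).2)) (fun t => hHin (mem_image_of_mem _ (proj t).2))
    (fun s hs => by simp [proj, projIcc_of_le_left _ hs, hVtop])
    (fun s hs => by simp [proj, projIcc_of_right_le _ hs, hVbot])
    (fun t ht => by simp [proj, projIcc_of_le_left _ ht, hHleft])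
    (fun t ht => by simp [proj, projIcc_of_right_le _ ht, hHright])
  exact ⟨γV (proj s), mem_image_of_mem _ (proj s).2, hst ▸ mem_image_of_mem _ (proj t).2⟩

/-- a curve stabbing the rectangle `[a,b]×[c,d]` vertically and a curve
stabbing it horizontally must intersect. -/
theorem stmt1 (a b c d : ℝ) (hab : a < b) (hcd : c < d)
    (γV γH : ℝ → ℝ × ℝ)
    (hγV : ContinuousOn γV (Icc 0 1)) (hγH : ContinuousOn γH (Icc 0 1))
    (hVin : γV '' Icc 0 1 ⊆ Icc a b ×ˢ Icc c d)
    (hHin : γH '' Icc 0 1 ⊆ Icc a b ×ˢ Icc c d)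
    (hVtop : (γV 0).2 = d) (hVbot : (γV 1).2 = c)
    (hHleft : (γH 0).1 = a) (hHright : (γH 1).1 = b) :
    ((γV '' Icc 0 1) ∩ (γH '' Icc 0 1)).Nonempty :=
  stmt1_general a b c d γV γH hγV hγH hVin hHin hVtop hVbot hHleft hHright
end

section
/- Define sequences (s_i) and (p_i) by s_1 = p_1 = 1, s_{i+1} = (p_i + 1)·s_i + p_i², and p_{i+1} = 2·p_i². Then for every k ≥ 1, 2^(2^(k-1) − 1) ≤ s_k ≤ 2^(2^(k-1)) − 1. -/
/-!
The sequence `p` has the closed form `p k = 2 ^ (2 ^ (k - 1) - 1)`, so `2 p k = 2 ^ 2 ^ (k - 1)` and the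
claim is the sandwich `p ≤ s < 2 p`. That sandwich survives one step of the recursion:
`s' = (p + 1) s + p²` is at least `2 p² = p'` and at most `3 p² + p - 1 < 4 p² = 2 p'`.
-/

theorem two_mul_sq_two_pow_pred {a : ℕ} (ha : 1 ≤ a) :
    2 * (2 ^ (a - 1)) ^ 2 = 2 ^ (2 * a - 1) := by
  rw [← pow_mul, ← pow_succ']
  congr 1
  omega

theorem two_mul_two_pow_two_pow_pred (k : ℕ) :
    2 * 2 ^ (2 ^ k - 1) = 2 ^ 2 ^ k := by
  rw [← pow_succ']
  have : 1 ≤ 2 ^ k := Nat.one_le_two_pow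
  congr 1
  omega

theorem sandwich_step {p s : ℕ} (hps : p ≤ s) (hsp : s < 2 * p) :
    2 * p ^ 2 ≤ (p + 1) * s + p ^ 2 ∧ (p + 1) * s + p ^ 2 < 2 * (2 * p ^ 2) := by
  constructor <;> nlinarith

section Recursion

variable {s p : ℕ → ℕ} (hs1 : s 1 = 1) (hp1 : p 1 = 1)
    (hs : ∀ i, 1 ≤ i → s (i + 1) = (p i + 1) * s i + (p i) ^ 2)
    (hp : ∀ i, 1 ≤ i → p (i + 1) = 2 * (p i) ^ 2)

include hp1 hp in
theorem p_eq_two_pow {k : ℕ} (hk : 1 ≤ k) : p k = 2 ^ (2 ^ (k - 1) - 1) := by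
  induction k, hk using Nat.le_induction with
  | base => simp [hp1]
  | succ n hn ih =>
    obtain ⟨m, rfl⟩ : ∃ m, n = m + 1 := ⟨n - 1, by omega⟩
    rw [hp _ hn, ih, two_mul_sq_two_pow_pred Nat.one_le_two_pow, ← pow_succ']
    rfl

include hs1 hp1 hs hp in
theorem p_le_s_lt_two_mul_p {k : ℕ} (hk : 1 ≤ k) : p k ≤ s k ∧ s k < 2 * p k := by
  induction k, hk using Nat.le_induction with
  | base => simp [hs1, hp1]
  | succ n hn ih =>
    rw [hs _ hn, hp _ hn]
    exact sandwich_step ih.1 ih.2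

end Recursion

/-- for the sequences defined by `s 1 = p 1 = 1`,
`s (i+1) = (p i + 1) * s i + (p i)^2` and `p (i+1) = 2 * (p i)^2`,
one has `2 ^ (2 ^ (k-1) - 1) ≤ s k ≤ 2 ^ (2 ^ (k-1)) - 1` for all `k ≥ 1`. -/
theorem stmt5 (s p : ℕ → ℕ) (hs1 : s 1 = 1) (hp1 : p 1 = 1)
    (hs : ∀ i, 1 ≤ i → s (i + 1) = (p i + 1) * s i + (p i) ^ 2)
    (hp : ∀ i, 1 ≤ i → p (i + 1) = 2 * (p i) ^ 2) :
    ∀ k, 1 ≤ k → 2 ^ (2 ^ (k - 1) - 1) ≤ s k ∧ s k ≤ 2 ^ (2 ^ (k - 1)) - 1 := by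
  intro k hk
  obtain ⟨hps, hsp⟩ := p_le_s_lt_two_mul_p hs1 hp1 hs hp hk
  rw [p_eq_two_pow hp1 hp hk] at hps hsp
  rw [two_mul_two_pow_two_pow_pred] at hsp
  exact ⟨hps, Nat.le_sub_one_of_lt hsp⟩
end
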